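/- The number of 2-linked subsets S of the even vertices of the hypercube Q_d that have size t and contain a given fixed vertex v is at most (e·d²)^(t-1). -/

import Mathlib

open Finset

/-- The hypercube graph `Q_d` on `{0,1}^d`: vertices adjacent iff they differ in
exactly one coordinate. -/
def cubeGraph (d : ℕ) : SimpleGraph (Fin d → Bool) where
  Adj x y := hammingDist x y = 1
  symm := ⟨fun x y (h : hammingDist x y = 1) => show hammingDist y x = 1 by rw [hammingDist_comm]; exact h⟩
  loopless := ⟨fun x (h : hammingDist x x = 1) => by simp [hammingDist_self] at h⟩

/-- The distance-2 graph on `{0,1}^d`: vertices adjacent iff Hamming distance 2. -/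
def distTwoGraph (d : ℕ) : SimpleGraph (Fin d → Bool) where
  Adj x y := hammingDist x y = 2
  symm := ⟨fun x y (h : hammingDist x y = 2) => show hammingDist y x = 2 by rw [hammingDist_comm]; exact h⟩
  loopless := ⟨fun x (h : hammingDist x x = 2) => by simp [hammingDist_self] at h⟩

/-- The even side `E` of the bipartition of `Q_d`. -/
def evenFinset (d : ℕ) : Finset (Fin d → Bool) :=
  Finset.univ.filter fun x => Even (∑ i, if x i then 1 else 0 : ℕ)

/-- The odd side `O` of the bipartition of `Q_d`. -/
def oddFinset (d : ℕ) : Finset (Fin d → Bool) :=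
  Finset.univ.filter fun x => ¬ Even (∑ i, if x i then 1 else 0 : ℕ)

/-- The neighbourhood `N(A)` of a set of vertices in `Q_d`. -/
def nbhd (d : ℕ) (A : Finset (Fin d → Bool)) : Finset (Fin d → Bool) :=
  A.biUnion fun x => Finset.univ.filter fun y => hammingDist x y = 1

/-- `S` is 2-linked: connected in the square of `Q_d` (for `S` inside one side of the
bipartition this is connectivity in the distance-2 graph). -/
def TwoLinked (d : ℕ) (S : Finset (Fin d → Bool)) : Prop :=
  ((distTwoGraph d).induce (S : Set (Fin d → Bool))).Connected

abbrev Pr (d : ℕ) := {p : Fin d × Fin d // p.1 < p.2}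

def flipP {d : ℕ} (p : Pr d) (x : Fin d → Bool) : Fin d → Bool :=
  fun k => if k = p.1.1 ∨ k = p.1.2 then !(x k) else x k

def runC {d : ℕ} : List (Fin d → Bool) → List (Option (Pr d)) →
    List (Fin d → Bool) × Finset (Fin d → Bool)
  | st, [] => (st, ∅)
  | st, none :: l => runC st.tail l
  | st, some p :: l =>
      let r := runC (flipP p st.headI :: st) l
      (r.1, insert (flipP p st.headI) r.2)

@[simp] lemma runC_nil {d : ℕ} (st : List (Fin d → Bool)) : runC st [] = (st, ∅) := rfl
@[simp] lemma runC_none {d : ℕ} (st : List (Fin d → Bool)) (l) :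
    runC st (none :: l) = runC st.tail l := rfl
@[simp] lemma runC_some {d : ℕ} (st : List (Fin d → Bool)) (p : Pr d) (l) :
    runC st (some p :: l) =
      ((runC (flipP p st.headI :: st) l).1,
        insert (flipP p st.headI) (runC (flipP p st.headI :: st) l).2) := rfl

lemma runC_append {d : ℕ} (l1 l2 : List (Option (Pr d))) :
    ∀ st, runC st (l1 ++ l2) =
      ((runC (runC st l1).1 l2).1, (runC st l1).2 ∪ (runC (runC st l1).1 l2).2) := by
  induction l1 with
  | nil => intro st; simp
  | cons hd tl ih =>
    intro st
    cases hd with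
    | none => simpa using ih st.tail
    | some p => simp [ih, Finset.insert_union]

lemma exists_flip {d : ℕ} (x y : Fin d → Bool) (h : hammingDist x y = 2) :
    ∃ p : Pr d, flipP p x = y := by
  have hdef : hammingDist x y = (Finset.univ.filter fun i => x i ≠ y i).card := rfl
  rw [hdef] at h
  obtain ⟨a, b, hab, hset⟩ := Finset.card_eq_two.mp h
  have key : ∀ (a b : Fin d), a < b →
      (Finset.univ.filter fun i => x i ≠ y i) = {a, b} → ∃ p : Pr d, flipP p x = y := by
    intro a b hlt hset
    refine ⟨⟨(a, b), hlt⟩, funext fun k => ?_⟩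
    by_cases hk : k = a ∨ k = b
    · have hne : x k ≠ y k := by
        have : k ∈ (Finset.univ.filter fun i => x i ≠ y i) := by
          rw [hset]; simp [hk]
        simpa using this
      simp only [flipP, hk, if_true]
      cases hxk : x k <;> cases hyk : y k <;> simp_all
    · have heq : x k = y k := by
        have : k ∉ (Finset.univ.filter fun i => x i ≠ y i) := by
          rw [hset]; simpa using hk
        simpa using this
      simp only [flipP, hk, if_false]; exact heq
  rcases lt_or_gt_of_ne hab with hlt | hlt
  · exact key a b hlt hset
  · exact key b a hlt (by rw [hset]; exact Finset.pair_comm a b)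

theorem exists_code {d : ℕ} (S : Finset (Fin d → Bool)) (v : Fin d → Bool) (hv : v ∈ S)
    (hconn : ∀ y ∈ S, Relation.ReflTransGen (fun a b => b ∈ S ∧ hammingDist a b = 2) v y) :
    ∃ l : List (Option (Pr d)), l.length = 2 * (S.card - 1) ∧
      l.countP (·.isSome) = S.card - 1 ∧
      ∀ st, runC (v :: st) l = (v :: st, S.erase v) := by
  classical
  induction S using Finset.strongInduction generalizing v with
  | _ S IH =>
  by_cases hS' : S.erase v = ∅
  · refine ⟨[], ?_, ?_, ?_⟩
    · have : S = {v} := by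
        apply Finset.eq_singleton_iff_unique_mem.mpr
        refine ⟨hv, fun y hy => ?_⟩
        by_contra hne
        exact absurd (Finset.mem_erase.mpr ⟨hne, hy⟩) (by simp [hS'])
      simp [this]
    · have : S = {v} := by
        apply Finset.eq_singleton_iff_unique_mem.mpr
        refine ⟨hv, fun y hy => ?_⟩
        by_contra hne
        exact absurd (Finset.mem_erase.mpr ⟨hne, hy⟩) (by simp [hS'])
      simp [this]
    · intro st; simp [hS']
  · -- pick y0 ∈ S.erase v, get first step u0
    obtain ⟨y0, hy0⟩ := Finset.nonempty_iff_ne_empty.mpr hS'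
    have hy0v : y0 ≠ v := (Finset.mem_erase.mp hy0).1
    have hy0S : y0 ∈ S := (Finset.mem_erase.mp hy0).2
    have hexists : ∃ c, c ∈ S ∧ hammingDist v c = 2 := by
      rcases (Relation.ReflTransGen.cases_head (hconn y0 hy0S)) with heq | ⟨c, hc, _⟩
      · exact absurd heq.symm hy0v
      · exact ⟨c, hc⟩
    obtain ⟨u0, hu0S, hu0d⟩ := hexists
    have hu0v : u0 ≠ v := by
      intro h; rw [h] at hu0d; simp [hammingDist_self] at hu0d
    have hu0S' : u0 ∈ S.erase v := Finset.mem_erase.mpr ⟨hu0v, hu0S⟩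
    set S' := S.erase v with hS'def
    have hvS' : v ∉ S' := Finset.notMem_erase v S
    -- component of u0 in S'
    set Rel' : (Fin d → Bool) → (Fin d → Bool) → Prop :=
      fun a b => a ∈ S' ∧ b ∈ S' ∧ hammingDist a b = 2 with hRel'
    set C : Finset (Fin d → Bool) := S'.filter (fun x => Relation.ReflTransGen Rel' u0 x)
      with hCdef
    have hu0C : u0 ∈ C := by
      rw [hCdef]; exact Finset.mem_filter.mpr ⟨hu0S', Relation.ReflTransGen.refl⟩
    have hCsub : C ⊆ S' := Finset.filter_subset _ _
    have hCclosed : ∀ b c, b ∈ C → c ∈ S' → hammingDist b c = 2 → c ∈ C := by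
      intro b c hb hc hd2
      rw [hCdef] at hb ⊢
      obtain ⟨hbS', hbreach⟩ := Finset.mem_filter.mp hb
      exact Finset.mem_filter.mpr ⟨hc, hbreach.tail ⟨hbS', hc, hd2⟩⟩
    -- connectivity of C from u0
    have hCconn : ∀ y ∈ C, Relation.ReflTransGen
        (fun a b => b ∈ C ∧ hammingDist a b = 2) u0 y := by
      intro y hy
      obtain ⟨hyS', hreach⟩ := Finset.mem_filter.mp (hCdef ▸ hy)
      clear hy hyS'
      induction hreach with
      | refl => exact Relation.ReflTransGen.refl
      | tail h1 h2 ih =>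
        rename_i b c
        obtain ⟨hbS', hcS', hd2⟩ := h2
        have hbC : b ∈ C := by
          rw [hCdef]; exact Finset.mem_filter.mpr ⟨hbS', h1⟩
        exact ih.tail ⟨hCclosed b c hbC hcS' hd2, hd2⟩
    set Rest : Finset (Fin d → Bool) := S' \ C with hRestdef
    -- connectivity of insert v Rest from v
    have hRestconn : ∀ y ∈ Rest, Relation.ReflTransGen
        (fun a b => b ∈ insert v Rest ∧ hammingDist a b = 2) v y := by
      intro y hyRest
      have hyS : y ∈ S := Finset.mem_of_mem_erase (Finset.mem_sdiff.mp hyRest).1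
      have main : ∀ z, Relation.ReflTransGen
          (fun a b => b ∈ S ∧ hammingDist a b = 2) v z →
          (z = v ∨ z ∈ C ∨ (z ∈ S' ∧ Relation.ReflTransGen
            (fun a b => b ∈ insert v Rest ∧ hammingDist a b = 2) v z)) := by
        intro z hz
        induction hz with
        | refl => exact Or.inl rfl
        | tail h1 h2 ih =>
          rename_i b c
          obtain ⟨hcS, hcd⟩ := h2
          by_cases hcv : c = v
          · exact Or.inl hcv
          · have hcS' : c ∈ S' := Finset.mem_erase.mpr ⟨hcv, hcS⟩
            rcases ih with hbv | hbC | ⟨hbS', hbr⟩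
            · -- b = v, so c is a neighbor of v
              subst hbv
              by_cases hcC : c ∈ C
              · exact Or.inr (Or.inl hcC)
              · refine Or.inr (Or.inr ⟨hcS', Relation.ReflTransGen.single
                  ⟨Finset.mem_insert_of_mem (Finset.mem_sdiff.mpr ⟨hcS', hcC⟩), hcd⟩⟩)
            · exact Or.inr (Or.inl (hCclosed b c hbC hcS' hcd))
            · by_cases hcC : c ∈ C
              · exact Or.inr (Or.inl hcC)
              · refine Or.inr (Or.inr ⟨hcS', hbr.tail
                  ⟨Finset.mem_insert_of_mem (Finset.mem_sdiff.mpr ⟨hcS', hcC⟩), hcd⟩⟩)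
      rcases main y (hconn y hyS) with h | h | h
      · exact absurd h (by
          intro hyv; rw [hyv] at hyRest
          exact hvS' (Finset.mem_sdiff.mp hyRest).1)
      · exact absurd h (Finset.mem_sdiff.mp hyRest).2
      · exact h.2
  -- apply IH to C with root u0
    have hCne : C ⊂ S := by
      refine Finset.ssubset_iff_of_subset (hCsub.trans (Finset.erase_subset v S)) |>.mpr
        ⟨v, hv, fun hvC => hvS' (hCsub hvC)⟩
    obtain ⟨lC, hlC1, hlC2, hlC3⟩ := IH C hCne u0 hu0C hCconn
    -- apply IH to insert v Rest with root v
    have hvRest : v ∉ Rest := fun h => hvS' (Finset.mem_sdiff.mp h).1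
    have hRestsub : insert v Rest ⊂ S := by
      refine Finset.ssubset_iff_of_subset ?_ |>.mpr ⟨u0, hu0S, ?_⟩
      · intro x hx
        rcases Finset.mem_insert.mp hx with h | h
        · exact h ▸ hv
        · exact Finset.mem_of_mem_erase (Finset.mem_sdiff.mp h).1
      · intro hu0R
        rcases Finset.mem_insert.mp hu0R with h | h
        · exact hu0v h
        · exact (Finset.mem_sdiff.mp h).2 hu0C
    have hRestconn' : ∀ y ∈ insert v Rest, Relation.ReflTransGen
        (fun a b => b ∈ insert v Rest ∧ hammingDist a b = 2) v y := by
      intro y hy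
      rcases Finset.mem_insert.mp hy with h | h
      · exact h ▸ Relation.ReflTransGen.refl
      · exact hRestconn y h
    obtain ⟨lR, hlR1, hlR2, hlR3⟩ := IH (insert v Rest) hRestsub v
      (Finset.mem_insert_self v Rest) hRestconn'
    obtain ⟨p, hp⟩ := exists_flip v u0 hu0d
    refine ⟨some p :: (lC ++ none :: lR), ?_, ?_, ?_⟩
    · -- length
      have h1 : (insert v Rest).card = Rest.card + 1 := Finset.card_insert_of_notMem hvRest
      have h2 : S'.card = S.card - 1 := Finset.card_erase_of_mem hv
      have h3 : C.card + Rest.card = S'.card := by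
        rw [hRestdef]
        rw [Finset.card_sdiff_of_subset hCsub]
        have := Finset.card_le_card hCsub
        omega
      have h4 : 1 ≤ C.card := Finset.card_pos.mpr ⟨u0, hu0C⟩
      have h5 : 1 ≤ S.card := Finset.card_pos.mpr ⟨v, hv⟩
      simp only [List.length_cons, List.length_append, hlC1, hlR1]
      omega
    · have h1 : (insert v Rest).card = Rest.card + 1 := Finset.card_insert_of_notMem hvRest
      have h2 : S'.card = S.card - 1 := Finset.card_erase_of_mem hv
      have h3 : C.card + Rest.card = S'.card := by
        rw [hRestdef, Finset.card_sdiff_of_subset hCsub]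
        have := Finset.card_le_card hCsub
        omega
      have h4 : 1 ≤ C.card := Finset.card_pos.mpr ⟨u0, hu0C⟩
      have h5 : 1 ≤ S.card := Finset.card_pos.mpr ⟨v, hv⟩
      simp only [List.countP_cons, List.countP_append, hlC2, hlR2]
      norm_num
      omega
    · intro st
      have hrunC := hlC3 (v :: st)
      have hrunR := hlR3 st
      simp only [runC_some, List.headI, hp]
      rw [runC_append, hrunC]
      simp only [runC_none, List.tail_cons]
      rw [hrunR]
      have herase : (insert v Rest).erase v = Rest := Finset.erase_insert hvRest
      rw [herase]
      have hfin : insert u0 (C.erase u0 ∪ Rest) = S' := by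
        rw [← Finset.insert_union, Finset.insert_erase hu0C, hRestdef]
        exact Finset.union_sdiff_of_subset hCsub
      simpa using hfin

lemma length_filterMap_id {α : Type*} (l : List (Option α)) :
    (l.filterMap id).length = l.countP (·.isSome) := by
  induction l with
  | nil => simp
  | cons hd tl ih => cases hd <;> simp [List.countP_cons, ← ih] <;> rfl

lemma list_reconstruct {α : Type*} :
    ∀ (l1 l2 : List (Option α)), l1.length = l2.length →
    (∀ i : ℕ, (l1.getD i none).isSome = (l2.getD i none).isSome) →
    l1.filterMap id = l2.filterMap id → l1 = l2 := by
  intro l1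
  induction l1 with
  | nil =>
    intro l2 h _ _
    exact (List.length_eq_zero_iff.mp h.symm).symm
  | cons a t ih =>
    intro l2 hlen hsome hfm
    cases l2 with
    | nil => simp at hlen
    | cons b t2 =>
      have h0 := hsome 0
      simp only [List.getD_cons_zero] at h0
      cases a with
      | none =>
        cases b with
        | none =>
          have := ih t2 (by simpa using hlen) (fun i => by simpa using hsome (i+1))
            (by simpa using hfm)
          rw [this]
        | some bb => simp at h0
      | some aa =>
        cases b with
        | none => simp at h0
        | some bb =>
          simp only [List.filterMap_cons, id] at hfm
          have hab : aa = bb := by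
            have := hfm
            simp at this
            exact this.1
          have htl : t.filterMap id = t2.filterMap id := by
            simp at hfm; exact hfm.2
          rw [hab, ih t2 (by simpa using hlen) (fun i => by simpa using hsome (i+1)) htl]

lemma pr_card_le (d : ℕ) : 2 * Fintype.card (Pr d) ≤ d ^ 2 := by
  classical
  have hcard : Fintype.card (Pr d) =
      (Finset.univ.filter fun p : Fin d × Fin d => p.1 < p.2).card :=
    Fintype.card_subtype _
  set A := Finset.univ.filter fun p : Fin d × Fin d => p.1 < p.2 with hA
  set B := Finset.univ.filter fun p : Fin d × Fin d => p.2 < p.1 with hB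
  have hAB : A.card = B.card := by
    apply Finset.card_bij' (fun p _ => p.swap) (fun p _ => p.swap)
    · intro p _; exact Prod.swap_swap p
    · intro p _; exact Prod.swap_swap p
    · intro p hp
      simp only [hA, hB, Finset.mem_filter, Finset.mem_univ, true_and] at hp ⊢
      simpa using hp
    · intro p hp
      simp only [hA, hB, Finset.mem_filter, Finset.mem_univ, true_and] at hp ⊢
      simpa using hp
  have hdisj : Disjoint A B := by
    rw [Finset.disjoint_left]
    intro p hpA hpB
    simp only [hA, hB, Finset.mem_filter] at hpA hpB
    exact absurd hpB.2 (not_lt_of_gt hpA.2)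
  have hunion : (A ∪ B).card ≤ d ^ 2 := by
    calc (A ∪ B).card ≤ (Finset.univ : Finset (Fin d × Fin d)).card :=
          Finset.card_le_card (Finset.subset_univ _)
      _ = d * d := by simp [Finset.card_univ]
      _ = d ^ 2 := (sq d).symm
  rw [Finset.card_union_of_disjoint hdisj] at hunion
  omega

lemma conn_of_twoLinked {d : ℕ} (S : Finset (Fin d → Bool)) (h : TwoLinked d S)
    (v : Fin d → Bool) (hv : v ∈ S) :
    ∀ y ∈ S, Relation.ReflTransGen (fun a b => b ∈ S ∧ hammingDist a b = 2) v y := by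
  intro y hy
  have hreach : ((distTwoGraph d).induce (S : Set (Fin d → Bool))).Reachable
      ⟨v, by simpa using hv⟩ ⟨y, by simpa using hy⟩ := h.preconnected _ _
  obtain ⟨w⟩ := hreach
  
  have : ∀ (a b : (S : Set (Fin d → Bool)))
      (_ : ((distTwoGraph d).induce (S : Set (Fin d → Bool))).Walk a b),
      Relation.ReflTransGen (fun a b => b ∈ S ∧ hammingDist a b = 2) a.val b.val := by
    intro a b w
    induction w with
    | nil => exact Relation.ReflTransGen.refl
    | cons hadj w' ih =>
      rename_i x c e
      refine Relation.ReflTransGen.head ⟨?_, ?_⟩ ih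
      · simpa using c.property
      · exact hadj
  exact this _ _ w

/-- The number of 2-linked subsets `S` of the even vertices of `Q_d` of size `t`
containing a given vertex `v` is at most `(e d²)^(t-1)`. -/
theorem twoLinked_sets_through_vertex_bound (d t : ℕ) (v : Fin d → Bool)
    (hv : v ∈ evenFinset d) :
    (Set.ncard {S : Finset (Fin d → Bool) |
        S ⊆ evenFinset d ∧ S.card = t ∧ v ∈ S ∧ TwoLinked d S} : ℝ)
      ≤ (Real.exp 1 * (d : ℝ) ^ 2) ^ (t - 1) := by
  classical
  have hbase : (0 : ℝ) ≤ Real.exp 1 * (d : ℝ) ^ 2 := by positivity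
  cases t with
  | zero =>
    have hempty : {S : Finset (Fin d → Bool) |
        S ⊆ evenFinset d ∧ S.card = 0 ∧ v ∈ S ∧ TwoLinked d S} = ∅ := by
      ext S
      simp only [Set.mem_setOf_eq, Set.mem_empty_iff_false, iff_false, not_and]
      intro _ h0 hvS _
      rw [Finset.card_eq_zero] at h0
      exact absurd (h0 ▸ hvS) (Finset.notMem_empty v)
    rw [hempty, Set.ncard_empty]
    simp only [Nat.cast_zero]
    positivity
  | succ m =>
    set A := {S : Finset (Fin d → Bool) |
        S ⊆ evenFinset d ∧ S.card = m + 1 ∧ v ∈ S ∧ TwoLinked d S} with hA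
    have key : ∀ x : A, ∃ l : List (Option (Pr d)), l.length = 2 * m ∧
        l.countP (·.isSome) = m ∧ runC [v] l = ([v], x.val.erase v) := by
      rintro ⟨S, hsub, hcard, hvS, hTL⟩
      obtain ⟨l, hl1, hl2, hl3⟩ := exists_code S v hvS (conn_of_twoLinked S hTL v hvS)
      rw [hcard] at hl1 hl2
      simp only [Nat.add_sub_cancel] at hl1 hl2
      exact ⟨l, hl1, hl2, hl3 []⟩
    choose L h1 h2 h3 using key
    set f : A → (Fin (2 * m) → Bool) × (Fin m → Pr d) :=
      fun x => (fun i => ((L x).getD i none).isSome,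
        fun j => ((L x).filterMap id).get
          ⟨j.val, by rw [length_filterMap_id, h2 x]; exact j.isLt⟩) with hf
    have hinj : Function.Injective f := by
      intro x y hxy
      have hb : (f x).1 = (f y).1 := by rw [hxy]
      have hp : (f x).2 = (f y).2 := by rw [hxy]
      have hLeq : L x = L y := by
        apply list_reconstruct _ _ (by rw [h1 x, h1 y])
        · intro i
          by_cases hi : i < 2 * m
          · exact congrFun hb ⟨i, hi⟩
          · rw [List.getD_eq_default _ _ (by rw [h1 x]; omega),
              List.getD_eq_default _ _ (by rw [h1 y]; omega)]
        · apply List.ext_get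
          · rw [length_filterMap_id, length_filterMap_id, h2 x, h2 y]
          · intro n hn1 hn2
            have hnm : n < m := by rwa [length_filterMap_id, h2 x] at hn1
            exact congrFun hp ⟨n, hnm⟩
      have hx3 := h3 x
      have hy3 := h3 y
      rw [hLeq, hy3] at hx3
      have herase : (x.val).erase v = (y.val).erase v := by
        have := congrArg Prod.snd hx3
        simpa using this.symm
      have hvx : v ∈ x.val := x.property.2.2.1
      have hvy : v ∈ y.val := y.property.2.2.1
      apply Subtype.ext
      rw [← Finset.insert_erase hvx, ← Finset.insert_erase hvy, herase]
    have h4 : Nat.card A ≤ Nat.card ((Fin (2 * m) → Bool) × (Fin m → Pr d)) :=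
      Nat.card_le_card_of_injective f hinj
    have h5 : Nat.card ((Fin (2 * m) → Bool) × (Fin m → Pr d)) =
        2 ^ (2 * m) * Fintype.card (Pr d) ^ m := by
      rw [Nat.card_eq_fintype_card, Fintype.card_prod, Fintype.card_fun, Fintype.card_fun,
        Fintype.card_fin, Fintype.card_fin, Fintype.card_bool]
    rw [h5] at h4
    have hncard : (Set.ncard A : ℝ) ≤ ((2 ^ (2 * m) * Fintype.card (Pr d) ^ m : ℕ) : ℝ) := by
      rw [← Nat.card_coe_set_eq]
      exact_mod_cast h4
    set P : ℝ := (Fintype.card (Pr d) : ℝ) with hP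
    have hPnonneg : 0 ≤ P := by positivity
    have hPle : 2 * P ≤ (d : ℝ) ^ 2 := by
      have := pr_card_le d
      have : ((2 * Fintype.card (Pr d) : ℕ) : ℝ) ≤ ((d ^ 2 : ℕ) : ℝ) := by exact_mod_cast this
      push_cast at this
      linarith
    have he2 : (2 : ℝ) ≤ Real.exp 1 := by
      have := Real.add_one_le_exp 1
      linarith
    have hstep : (4 * P : ℝ) ≤ Real.exp 1 * (d : ℝ) ^ 2 := by
      have hd2 : (0 : ℝ) ≤ (d : ℝ) ^ 2 := by positivity
      nlinarith
    calc (Set.ncard A : ℝ) ≤ ((2 ^ (2 * m) * Fintype.card (Pr d) ^ m : ℕ) : ℝ) := hncard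
      _ = (4 * P) ^ m := by
          push_cast
          rw [pow_mul, mul_pow]
          norm_num
          rfl
      _ ≤ (Real.exp 1 * (d : ℝ) ^ 2) ^ m := by
          apply pow_le_pow_left₀ (by positivity) hstep
      _ = (Real.exp 1 * (d : ℝ) ^ 2) ^ (m + 1 - 1) := by simp
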